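/- Let V be a finite-dimensional vector space over ZMod 2 and B a symmetric bilinear form on V. (a) For every linear functional γ : V →ₗ[ZMod 2] ZMod 2 and every ℤ/4-quadratic enhancement q of B, the function x ↦ q(x) + ⟨2⟩(γ(x)) is again a ℤ/4-quadratic enhancement of B. (b) For any two ℤ/4-quadratic enhancements q and q' of B there exists a unique linear functional γ : V →ₗ[ZMod 2] ZMod 2 with q'(x) = q(x) + ⟨2⟩(γ(x)) for all x. In other words, the set of ℤ/4-quadratic enhancements of B is a torsor under the dual space of V. -/
import Mathlib


/-- `q : V → ZMod 4` is a `ℤ/4`-quadratic enhancement of the symmetric bilinear form `B`,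
i.e. `q(x+y) = q(x) + q(y) + ⟨2⟩(B(x,y))` where `⟨2⟩ : ZMod 2 → ZMod 4` sends `1` to `2`. -/
def IsQuadEnh4 {V : Type*} [AddCommGroup V] [Module (ZMod 2) V]
    (B : LinearMap.BilinForm (ZMod 2) V) (q : V → ZMod 4) : Prop :=
  ∀ x y : V, q (x + y) = q x + q y + 2 * ((B x y).val : ZMod 4)

lemma twoval_add (a b : ZMod 2) :
    (2 : ZMod 4) * ((a + b).val : ZMod 4) = 2 * (a.val : ZMod 4) + 2 * (b.val : ZMod 4) := by
  revert a b; decide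

lemma twoval_inj (a b : ZMod 2)
    (h : (2 : ZMod 4) * (a.val : ZMod 4) = 2 * (b.val : ZMod 4)) : a = b := by
  revert h; revert b; revert a; decide

lemma two_torsion_zmod4 (a : ZMod 4) (h : a + a = 0) : a = 0 ∨ a = 2 := by
  revert h; revert a; decide

lemma zmod2_cases (c : ZMod 2) : c = 0 ∨ c = 1 := by revert c; decide

/-- The set of `ℤ/4`-quadratic enhancements of a symmetric bilinear form on a
finite-dimensional `ZMod 2`-vector space is a torsor under the dual space: adding
`⟨2⟩ ∘ γ` to an enhancement gives an enhancement, and any two enhancements differ by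
`⟨2⟩ ∘ γ` for a unique linear functional `γ`. -/
theorem quadEnh4_torsor
    (V : Type*) [AddCommGroup V] [Module (ZMod 2) V] [FiniteDimensional (ZMod 2) V]
    (B : LinearMap.BilinForm (ZMod 2) V)
    (hsymm : ∀ x y : V, B x y = B y x) :
    (∀ (γ : V →ₗ[ZMod 2] ZMod 2) (q : V → ZMod 4), IsQuadEnh4 B q →
      IsQuadEnh4 B (fun x => q x + 2 * ((γ x).val : ZMod 4))) ∧
    (∀ q q' : V → ZMod 4, IsQuadEnh4 B q → IsQuadEnh4 B q' →
      ∃! γ : V →ₗ[ZMod 2] ZMod 2, ∀ x : V, q' x = q x + 2 * ((γ x).val : ZMod 4)) := by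
  constructor
  · intro γ q hq x y
    simp only
    rw [hq, map_add, twoval_add]
    ring
  · intro q q' hq hq'
    set d : V → ZMod 4 := fun x => q' x - q x with hd
    have hdadd : ∀ x y, d (x + y) = d x + d y := by
      intro x y
      simp only [hd, hq x y, hq' x y]
      ring
    have hxx : ∀ x : V, x + x = 0 := by
      intro x
      have h1 : ((1 : ZMod 2) + 1) • x = (0 : ZMod 2) • x := by
        rw [show (1 : ZMod 2) + 1 = 0 from by decide]
      rw [add_smul, one_smul, zero_smul] at h1
      exact h1
    have hd0 : d 0 = 0 := by
      have h1 := hdadd 0 0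
      simp only [add_zero] at h1
      linear_combination -h1
    have hd2 : ∀ x, d x = 0 ∨ d x = 2 := by
      intro x
      apply two_torsion_zmod4
      rw [← hdadd, hxx, hd0]
    set γ₀ : V → ZMod 2 := fun x => if d x = 2 then 1 else 0 with hγ₀
    have hd2val : ∀ x, d x = 2 * ((γ₀ x).val : ZMod 4) := by
      intro x
      have hif0 : d x = 0 → γ₀ x = 0 := fun h => by simp only [hγ₀, h]; decide
      have hif2 : d x = 2 → γ₀ x = 1 := fun h => by simp only [hγ₀, h]; decide
      rcases hd2 x with h0 | h0
      · rw [h0, hif0 h0]; decide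
      · rw [h0, hif2 h0]; decide
    have hq'eq : ∀ x, q' x = q x + 2 * ((γ₀ x).val : ZMod 4) := by
      intro x
      have := hd2val x
      simp only [hd] at this
      linear_combination this
    have hγadd : ∀ x y, γ₀ (x + y) = γ₀ x + γ₀ y := by
      intro x y
      apply twoval_inj
      rw [twoval_add, ← hd2val, ← hd2val, ← hd2val, hdadd]
    have hγ₀zero : γ₀ 0 = 0 := by
      simp only [hγ₀, hd0]
      decide
    have hγsmul : ∀ (c : ZMod 2) (x : V), γ₀ (c • x) = c • γ₀ x := by
      intro c x
      rcases zmod2_cases c with h | h <;> subst h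
      · simp [zero_smul, hγ₀zero]
      · simp [one_smul]
    refine ⟨⟨⟨γ₀, hγadd⟩, hγsmul⟩, hq'eq, ?_⟩
    intro γ' hγ'
    ext x
    apply twoval_inj
    have h1 := hγ' x
    have h2 := hq'eq x
    rw [h1] at h2
    exact add_left_cancel h2
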